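/- For every integer n ≥ 100 and k = ⌊n/2⌋, one has E_k(n) ≤ 5; that is, there exists a Boolean function f from the k-element subsets of [n] to {0,1} whose deterministic query complexity D_k(f) is at least n − 5. -/

import Mathlib

/-- A (binary) decision tree over ground set `[n]` (positions `Fin n`):
leaves are labelled with a Boolean output, inner nodes with a query `i ∈ [n]`;
the left subtree corresponds to the answer `i ∉ A`, the right one to `i ∈ A`. -/
inductive DecTree (n : ℕ) : Type
  | leaf : Bool → DecTree n
  | node : Fin n → DecTree n → DecTree n → DecTree n

namespace DecTree

/-- The height (depth) of a decision tree: the maximum number of queries on a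
root-to-leaf path. -/
def depth {n : ℕ} : DecTree n → ℕ
  | leaf _ => 0
  | node _ t0 t1 => max (depth t0) (depth t1) + 1

/-- Evaluate a decision tree on an input set `A ⊆ [n]`. -/
def eval {n : ℕ} : DecTree n → Finset (Fin n) → Bool
  | leaf b, _ => b
  | node i t0 t1, A => if i ∈ A then eval t1 A else eval t0 A

end DecTree

/-- The slice: the `k`-element subsets of `[n]`. -/
def Slice (n k : ℕ) : Type := {A : Finset (Fin n) // A.card = k}

/-- A decision tree computes `f` on the slice if it evaluates to `f A` for every
`A` in the slice. -/
def Computes {n k : ℕ} (T : DecTree n) (f : Slice n k → Bool) : Prop :=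
  ∀ A : Slice n k, T.eval A.val = f A

/-- Deterministic query complexity of `f` on the slice: the minimum height of a
decision tree computing `f`. -/
noncomputable def Dquery (n k : ℕ) (f : Slice n k → Bool) : ℕ :=
  sInf {d : ℕ | ∃ T : DecTree n, T.depth ≤ d ∧ Computes T f}

/-- `Dmax n k`: the maximum deterministic query complexity over all Boolean
functions on the slice of `k`-subsets of `[n]`. -/
noncomputable def Dmax (n k : ℕ) : ℕ :=
  sSup {d : ℕ | ∃ f : Slice n k → Bool, Dquery n k f = d}

/-- `Equery n k = n - Dmax n k`. -/
noncomputable def Equery (n k : ℕ) : ℕ := n - Dmax n k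

/-!
A counting argument. A decision tree may be assumed canonical: it never repeats a query and stops
as soon as the answers determine the input. With `m` unqueried positions, `b` ones still to be
found and depth budget `m - 6`, such a tree is a leaf or a query (`m` choices) above canonical trees
for `(m - 1, b)` and `(m - 1, b - 1)`. So there are at most `2 ^ potential n (n / 2)` of them,
where `potential` solves `P(m, b) = ⌈log₂ 2m⌉ + P(m - 1, b) + P(m - 1, b - 1)`. Expanding `P`
along the lattice paths of Pascal's triangle and using
`C(n - j, ·) ≤ (n + 1) / (n - j + 1) · 2⁻ʲ · C(n, n / 2)` gives `potential n (n / 2) < C(n, n / 2)`,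
so trees of depth `n - 6` compute fewer than `2 ^ C(n, n / 2)` of the functions on the middle slice.
-/

open Finset

deriving instance DecidableEq for DecTree

namespace DecTree

variable {n : ℕ}

def complete (F : Finset (Fin n) → Bool) : List (Fin n) → DecTree n
  | [] => leaf (F ∅)
  | i :: l => node i (complete F l) (complete (fun s => F (insert i s)) l)

lemma depth_complete (F : Finset (Fin n) → Bool) (l : List (Fin n)) :
    (complete F l).depth = l.length := by
  induction l generalizing F with
  | nil => rfl
  | cons i l ih => simp [complete, depth, ih]

lemma eval_complete (F : Finset (Fin n) → Bool) (l : List (Fin n)) (A : Finset (Fin n)) :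
    (complete F l).eval A = F (A.filter (· ∈ l)) := by
  induction l generalizing F with
  | nil => simp [complete, eval]
  | cons i l ih =>
    simp only [complete, eval, ih]
    split_ifs with hi <;>
    · congr 1
      ext x
      by_cases hx : x = i <;> simp [hx, hi]

end DecTree

section QueryComplexity

variable {n k : ℕ}

lemma exists_computes_depth_le (f : Slice n k → Bool) :
    ∃ T : DecTree n, T.depth ≤ n ∧ Computes T f := by
  classical
  refine ⟨.complete (fun s => if h : s.card = k then f ⟨s, h⟩ else false) (List.finRange n),
    by simp [DecTree.depth_complete], fun A => ?_⟩
  rw [DecTree.eval_complete, filter_true_of_mem fun i _ => List.mem_finRange i, dif_pos A.2]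
  rfl

lemma exists_computes_depth_le_Dquery (f : Slice n k → Bool) :
    ∃ T : DecTree n, T.depth ≤ Dquery n k f ∧ Computes T f :=
  Nat.sInf_mem (s := {d | ∃ T : DecTree n, T.depth ≤ d ∧ Computes T f})
    ⟨n, exists_computes_depth_le f⟩

lemma Dquery_le (f : Slice n k → Bool) : Dquery n k f ≤ n :=
  Nat.sInf_le (exists_computes_depth_le f)

lemma Dquery_le_Dmax (f : Slice n k → Bool) : Dquery n k f ≤ Dmax n k :=
  le_csSup ⟨n, by rintro _ ⟨g, rfl⟩; exact Dquery_le g⟩ ⟨f, rfl⟩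

lemma le_Dquery_of_forall_computes {f : Slice n k → Bool} {d : ℕ}
    (h : ∀ T : DecTree n, T.depth < d → ¬Computes T f) : d ≤ Dquery n k f := by
  obtain ⟨T, hT, hf⟩ := exists_computes_depth_le_Dquery f
  by_contra! hlt
  exact h T (hT.trans_lt hlt) hf

end QueryComplexity

section Consistent

variable {n : ℕ}

def Consistent (k : ℕ) (S₁ S₀ A : Finset (Fin n)) : Prop :=
  A.card = k ∧ S₁ ⊆ A ∧ Disjoint A S₀

lemma Consistent.eq {k : ℕ} {S₁ S₀ A B : Finset (Fin n)}
    (hforced : k - S₁.card = 0 ∨ n - k - S₀.card = 0)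
    (hA : Consistent k S₁ S₀ A) (hB : Consistent k S₁ S₀ B) : A = B := by
  suffices ∃ C, ∀ A, Consistent k S₁ S₀ A → A = C by
    obtain ⟨C, hC⟩ := this; rw [hC A hA, hC B hB]
  rcases hforced with hk | hk
  · refine ⟨S₁, fun A ⟨hAk, hSA, _⟩ => (eq_of_subset_of_card_le hSA (by omega)).symm⟩
  · refine ⟨S₀ᶜ, fun A ⟨hAk, _, hAS⟩ => eq_of_subset_of_card_le
      (fun x hx => mem_compl.2 (disjoint_left.1 hAS hx)) ?_⟩
    rw [card_compl, Fintype.card_fin]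
    omega

lemma consistent_insert_left {k : ℕ} {S₁ S₀ A : Finset (Fin n)} {i : Fin n} :
    Consistent k (insert i S₁) S₀ A ↔ Consistent k S₁ S₀ A ∧ i ∈ A := by
  simp only [Consistent, insert_subset_iff]
  tauto

lemma consistent_insert_right {k : ℕ} {S₁ S₀ A : Finset (Fin n)} {i : Fin n} :
    Consistent k S₁ (insert i S₀) A ↔ Consistent k S₁ S₀ A ∧ i ∉ A := by
  simp only [Consistent, disjoint_insert_right]
  tauto

end Consistent

namespace DecTree

variable {n : ℕ}

/-- Trees of depth at most `d` querying each position of `free` at most once and nothing else,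
where `ones` and `zeros` count the elements of `A` and of its complement not yet found; once one of
them is `0`, only one input is left and the tree is a leaf. -/
def canonical (free : Finset (Fin n)) (ones zeros : ℕ) : ℕ → Finset (DecTree n)
  | 0 => {leaf false, leaf true}
  | d + 1 =>
    if ones = 0 ∨ zeros = 0 then {leaf false, leaf true}
    else {leaf false, leaf true} ∪ free.biUnion fun i =>
      image₂ (node i) (canonical (free.erase i) ones (zeros - 1) d)
        (canonical (free.erase i) (ones - 1) zeros d)

lemma leaf_mem_canonical (free : Finset (Fin n)) (ones zeros d : ℕ) (b : Bool) :
    leaf b ∈ canonical free ones zeros d := by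
  have hb : leaf b ∈ ({leaf false, leaf true} : Finset (DecTree n)) := by cases b <;> simp
  cases d with
  | zero => exact hb
  | succ d =>
    rw [canonical]
    split_ifs
    exacts [hb, mem_union_left _ hb]

lemma exists_leaf_eval_eq {k : ℕ} {S₁ S₀ : Finset (Fin n)}
    (hforced : k - S₁.card = 0 ∨ n - k - S₀.card = 0) (T : DecTree n) :
    ∃ b, ∀ A, Consistent k S₁ S₀ A → (leaf b).eval A = T.eval A := by
  by_cases hA : ∃ A, Consistent k S₁ S₀ A
  · obtain ⟨A₀, hA₀⟩ := hA
    exact ⟨T.eval A₀, fun A hA' => by rw [hA'.eq hforced hA₀]; rfl⟩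
  · exact ⟨true, fun A hA' => (hA ⟨A, hA'⟩).elim⟩

lemma exists_canonical_eval_eq (k : ℕ) (T : DecTree n) {d : ℕ} (hd : T.depth ≤ d)
    (S₁ S₀ : Finset (Fin n)) :
    ∃ T' ∈ canonical (S₁ ∪ S₀)ᶜ (k - S₁.card) (n - k - S₀.card) d,
      ∀ A, Consistent k S₁ S₀ A → T'.eval A = T.eval A := by
  induction T generalizing d S₁ S₀ with
  | leaf b => exact ⟨leaf b, leaf_mem_canonical .., fun _ _ => rfl⟩
  | node i t₀ t₁ ih₀ ih₁ =>
    simp only [depth] at hd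
    obtain ⟨d, rfl⟩ : ∃ d', d = d' + 1 := ⟨d - 1, by omega⟩
    have hd₀ : t₀.depth ≤ d := by omega
    have hd₁ : t₁.depth ≤ d := by omega
    by_cases hforced : k - S₁.card = 0 ∨ n - k - S₀.card = 0
    · obtain ⟨b, hb⟩ := exists_leaf_eval_eq hforced (node i t₀ t₁)
      exact ⟨leaf b, leaf_mem_canonical .., hb⟩
    by_cases hi₁ : i ∈ S₁
    · obtain ⟨T', hT', hT'eq⟩ := ih₁ (hd₁.trans d.le_succ) S₁ S₀
      exact ⟨T', hT', fun A hA => by rw [hT'eq A hA, eval, if_pos (hA.2.1 hi₁)]⟩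
    by_cases hi₀ : i ∈ S₀
    · obtain ⟨T', hT', hT'eq⟩ := ih₀ (hd₀.trans d.le_succ) S₁ S₀
      exact ⟨T', hT', fun A hA => by
        rw [hT'eq A hA, eval, if_neg (disjoint_right.1 hA.2.2 hi₀)]⟩
    obtain ⟨T₀, hT₀, hT₀eq⟩ := ih₀ hd₀ S₁ (insert i S₀)
    obtain ⟨T₁, hT₁, hT₁eq⟩ := ih₁ hd₁ (insert i S₁) S₀
    have hfree₀ : (S₁ ∪ insert i S₀)ᶜ = (S₁ ∪ S₀)ᶜ.erase i := by ext; simp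
    have hfree₁ : (insert i S₁ ∪ S₀)ᶜ = (S₁ ∪ S₀)ᶜ.erase i := by ext; simp
    rw [hfree₀, card_insert_of_notMem hi₀, ← Nat.sub_sub] at hT₀
    rw [hfree₁, card_insert_of_notMem hi₁, ← Nat.sub_sub] at hT₁
    refine ⟨node i T₀ T₁, ?_, fun A hA => ?_⟩
    · rw [canonical, if_neg hforced]
      exact mem_union_right _ <| mem_biUnion.2 ⟨i, by simp [hi₀, hi₁], mem_image₂_of_mem hT₀ hT₁⟩
    · by_cases hiA : i ∈ A
      · rw [eval, eval, if_pos hiA, if_pos hiA, hT₁eq A (consistent_insert_left.2 ⟨hA, hiA⟩)]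
      · rw [eval, eval, if_neg hiA, if_neg hiA, hT₀eq A (consistent_insert_right.2 ⟨hA, hiA⟩)]

end DecTree

def chooseZ (M : ℕ) (r : ℤ) : ℕ := if r < 0 then 0 else M.choose r.toNat

lemma chooseZ_natCast (M r : ℕ) : chooseZ M r = M.choose r := by simp [chooseZ]

lemma chooseZ_zero_left (r : ℤ) : chooseZ 0 r = if r = 0 then 1 else 0 := by
  unfold chooseZ
  split_ifs with h₁ h₂ h₂
  · omega
  · rfl
  · simp [h₂]
  · exact Nat.choose_eq_zero_of_lt (by omega)

lemma chooseZ_succ (M : ℕ) (r : ℤ) : chooseZ (M + 1) r = chooseZ M r + chooseZ M (r - 1) := by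
  unfold chooseZ
  rcases lt_trichotomy r 0 with hr | rfl | hr
  · simp [hr, show r - 1 < 0 by omega]
  · simp
  · obtain ⟨t, rfl⟩ : ∃ t : ℕ, r = (t + 1 : ℕ) := ⟨r.toNat - 1, by omega⟩
    rw [show ((t + 1 : ℕ) : ℤ) - 1 = t by push_cast; ring, if_neg (by omega), if_neg (by omega),
      if_neg (by omega), Int.toNat_natCast, Int.toNat_natCast, Nat.choose_succ_succ', add_comm]

/-- For `m ≥ 7`, `|canonical trees| ≤ 2 + m · |left subtrees| · |right subtrees|` is at most
`2 ^ weight m · |left subtrees| · |right subtrees|`; at `m = 6` the depth budget is spent and only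
the two leaves remain. -/
def weight (j : ℕ) : ℕ := if j ≤ 6 then 1 else Nat.clog 2 (2 * j)

lemma two_mul_le_two_pow_weight {j : ℕ} (hj : 7 ≤ j) : 2 * j ≤ 2 ^ weight j := by
  rw [weight, if_neg (by omega)]
  exact Nat.le_pow_clog one_lt_two _

lemma weight_pos (j : ℕ) : 0 < weight j := by
  unfold weight
  split_ifs with hj
  · exact one_pos
  · exact Nat.clog_pos one_lt_two (by omega)

lemma weight_le_self {j : ℕ} (hj : 6 ≤ j) : weight j ≤ j := by
  rw [weight]
  split_ifs
  · omega
  · refine Nat.clog_le_of_le_pow ?_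
    calc 2 * j = 2 * (j - 1 + 1) := by rw [Nat.sub_add_cancel (by omega)]
      _ ≤ 2 * 2 ^ (j - 1) := Nat.mul_le_mul_left 2 (Nat.lt_two_pow_self)
      _ = 2 ^ j := by rw [← pow_succ', Nat.sub_add_cancel (by omega)]

/-- Number of lattice paths from `(m, b)` to the interior points `(j, s)`, `0 < s < j`, of
Pascal's triangle, where a step goes from `(m, b)` to `(m - 1, b)` or `(m - 1, b - 1)`. -/
def interiorPaths (j m b : ℕ) : ℕ := ∑ s ∈ Icc 1 (j - 1), chooseZ (m - j) ((b : ℤ) - s)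

/-- Number of lattice paths from `(m, b)` to the boundary points `(j, 0)` and `(j, j)`. -/
def wallPaths (j m b : ℕ) : ℕ := chooseZ (m - j) b + chooseZ (m - j) ((b : ℤ) - j)

/-- Solves `P(m + 1, b) = weight (m + 1) + P(m, b) + P(m, b - 1)` for `0 < b ≤ m`, `6 ≤ m`, by
summing the weights of all lattice points below `(m, b)`, each counted with its number of paths. -/
def potential (m b : ℕ) : ℕ := ∑ j ∈ Icc 6 m, (weight j * interiorPaths j m b + wallPaths j m b)

lemma interiorPaths_self {m b : ℕ} (hb : 1 ≤ b) (hbm : b < m) : interiorPaths m m b = 1 := by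
  rw [interiorPaths, Nat.sub_self, sum_eq_single_of_mem b (by simp; omega)]
  · simp [chooseZ_zero_left]
  · intro s _ hs
    rw [chooseZ_zero_left, if_neg (by omega)]

lemma wallPaths_self {m b : ℕ} (hb : 1 ≤ b) (hbm : b < m) : wallPaths m m b = 0 := by
  simp only [wallPaths, Nat.sub_self, chooseZ_zero_left]
  split_ifs <;> omega

lemma interiorPaths_succ {j m b : ℕ} (hj : j ≤ m) (hb : 1 ≤ b) :
    interiorPaths j (m + 1) b = interiorPaths j m b + interiorPaths j m (b - 1) := by
  simp only [interiorPaths, Nat.sub_add_comm hj, chooseZ_succ, sum_add_distrib]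
  push_cast [hb]
  ring_nf

lemma wallPaths_succ {j m b : ℕ} (hj : j ≤ m) (hb : 1 ≤ b) :
    wallPaths j (m + 1) b = wallPaths j m b + wallPaths j m (b - 1) := by
  simp only [wallPaths, Nat.sub_add_comm hj, chooseZ_succ]
  push_cast [hb]
  ring_nf

lemma potential_succ {m b : ℕ} (hm : 6 ≤ m) (hb : 1 ≤ b) (hbm : b ≤ m) :
    potential (m + 1) b = weight (m + 1) + potential m b + potential m (b - 1) := by
  rw [potential, sum_Icc_succ_top (by omega), interiorPaths_self hb (by omega),
    wallPaths_self hb (by omega), mul_one, add_zero, add_comm, add_assoc, potential, potential,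
    ← sum_add_distrib]
  congr 1
  refine sum_congr rfl fun j hj => ?_
  rw [mem_Icc] at hj
  rw [interiorPaths_succ hj.2 hb, wallPaths_succ hj.2 hb]
  ring

lemma one_le_potential {m b : ℕ} (hm : 6 ≤ m) (hb : b ≤ m) : 1 ≤ potential m b := by
  refine le_trans ?_ (single_le_sum (fun j _ => Nat.zero_le _) (mem_Icc.2 ⟨hm, le_rfl⟩))
  rcases Nat.eq_zero_or_pos b with rfl | hb₀
  · exact le_add_left (by simp [wallPaths, chooseZ_zero_left])
  rcases hb.eq_or_lt with rfl | hbm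
  · exact le_add_left (by simp [wallPaths, chooseZ_zero_left])
  rw [interiorPaths_self hb₀ hbm, mul_one]
  exact (weight_pos m).trans_le (Nat.le_add_right _ _)

lemma two_le_two_pow_potential {m b : ℕ} (hm : 6 ≤ m) (hb : b ≤ m) : 2 ≤ 2 ^ potential m b :=
  Nat.pow_le_pow_right two_pos (one_le_potential hm hb)

namespace DecTree

variable {n : ℕ}

lemma card_leaves_le : ({leaf false, leaf true} : Finset (DecTree n)).card ≤ 2 :=
  card_insert_le _ _

lemma card_canonical_le (d : ℕ) (free : Finset (Fin n)) (b : ℕ) (hfree : free.card = d + 6)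
    (hb : b ≤ d + 6) : (canonical free b (d + 6 - b) d).card ≤ 2 ^ potential (d + 6) b := by
  induction d generalizing free b with
  | zero => exact card_leaves_le.trans (two_le_two_pow_potential (by omega) hb)
  | succ d ih =>
    rw [canonical]
    split_ifs with hforced
    · exact card_leaves_le.trans (two_le_two_pow_potential (by omega) hb)
    set X := 2 ^ potential (d + 6) b
    set Y := 2 ^ potential (d + 6) (b - 1)
    have hsub : ∀ i ∈ free, (image₂ (node i) (canonical (free.erase i) b (d + 1 + 6 - b - 1) d)
        (canonical (free.erase i) (b - 1) (d + 1 + 6 - b) d)).card ≤ X * Y := by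
      intro i hi
      have hcard : (free.erase i).card = d + 6 := by rw [card_erase_of_mem hi]; omega
      refine (card_image₂_le _ _ _).trans (Nat.mul_le_mul ?_ ?_)
      · rw [show d + 1 + 6 - b - 1 = d + 6 - b by omega]
        exact ih _ _ hcard (by omega)
      · rw [show d + 1 + 6 - b = d + 6 - (b - 1) by omega]
        exact ih _ _ hcard (by omega)
    have hXY : 1 ≤ X * Y := Nat.one_le_iff_ne_zero.2 (by positivity)
    calc _ ≤ 2 + ∑ i ∈ free, X * Y :=
          (card_union_le _ _).trans
            (add_le_add card_leaves_le (card_biUnion_le.trans (sum_le_sum hsub)))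
      _ = 2 + (d + 7) * (X * Y) := by rw [sum_const, hfree, smul_eq_mul]
      _ ≤ 2 * (d + 7) * (X * Y) := by nlinarith
      _ ≤ 2 ^ weight (d + 7) * (X * Y) :=
          Nat.mul_le_mul_right _ (two_mul_le_two_pow_weight (by omega))
      _ = 2 ^ potential (d + 1 + 6) b := by
        rw [potential_succ (by omega) (by omega) (by omega), pow_add, pow_add, mul_assoc]

end DecTree

lemma sum_Ico_le_div_of_le_mul {K : Type*} [Field K] [LinearOrder K] [IsStrictOrderedRing K]
    {a : ℕ → K} {r : K} {m : ℕ} (hr : r < 1) (ha : ∀ j ≥ m, 0 ≤ a j)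
    (h : ∀ j ≥ m, a (j + 1) ≤ r * a j) (L : ℕ) : ∑ j ∈ Ico m L, a j ≤ a m / (1 - r) := by
  have hr' : 0 < 1 - r := sub_pos.2 hr
  have key : ∀ L ≥ m, ∑ j ∈ Ico m L, a j + a L / (1 - r) ≤ a m / (1 - r) := by
    intro L hL
    induction L, hL using Nat.le_induction with
    | base => simp
    | succ L hL ih =>
      have hstep : a (L + 1) / (1 - r) ≤ r * a L / (1 - r) :=
        div_le_div_of_nonneg_right (h L hL) hr'.le
      have hsplit : a L + r * a L / (1 - r) = a L / (1 - r) := by field_simp; ring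
      rw [sum_Ico_succ_top hL]
      linarith
  rcases le_or_gt m L with hL | hL
  · linarith [key L hL, div_nonneg (ha L hL) hr'.le]
  · rw [Ico_eq_empty (by omega), sum_empty]
    exact div_nonneg (ha m le_rfl) hr'.le

def midBinom (M : ℕ) : ℕ := M.choose (M / 2)

lemma chooseZ_le_midBinom (M : ℕ) (r : ℤ) : chooseZ M r ≤ midBinom M := by
  unfold chooseZ
  split_ifs
  exacts [Nat.zero_le _, Nat.choose_le_middle _ _]

lemma midBinom_succ (M : ℕ) : 2 * (M + 1) * midBinom M ≤ (M + 2) * midBinom (M + 1) := by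
  unfold midBinom
  rcases Nat.even_or_odd' M with ⟨r, rfl | rfl⟩
  · rw [show 2 * r / 2 = r by omega, show (2 * r + 1) / 2 = r by omega]
    have h := Nat.choose_mul_succ_eq (2 * r) r
    rw [show 2 * r + 1 - r = r + 1 by omega] at h
    nlinarith
  · rw [show (2 * r + 1) / 2 = r by omega, show (2 * r + 1 + 1) / 2 = r + 1 by omega,
      Nat.choose_succ_succ', ← Nat.choose_symm_half]
    nlinarith

/-- `(M + 1) C(M, ⌊M/2⌋) / 2 ^ M` is nondecreasing. -/
lemma midBinom_sub_le {n j : ℕ} (hj : j ≤ n) :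
    ((n - j : ℕ) + 1 : ℚ) * 2 ^ j * midBinom (n - j) ≤ (n + 1) * midBinom n := by
  have hmono : Monotone fun M : ℕ => ((M : ℚ) + 1) * midBinom M / 2 ^ M := by
    refine monotone_nat_of_le_succ fun M => ?_
    rw [div_le_div_iff₀ (by positivity) (by positivity), pow_succ]
    have := (Nat.cast_le (α := ℚ)).2 (midBinom_succ M)
    push_cast at this ⊢
    nlinarith [pow_pos (two_pos : (0 : ℚ) < 2) M]
  obtain ⟨M, rfl⟩ : ∃ M, n = M + j := ⟨n - j, by omega⟩
  have h := hmono (Nat.le_add_right M j)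
  simp only [pow_add] at h
  rw [div_le_div_iff₀ (by positivity) (by positivity)] at h
  rw [Nat.add_sub_cancel]
  refine le_of_mul_le_mul_right ?_ (by positivity : (0 : ℚ) < 2 ^ M)
  push_cast at h ⊢
  linarith

lemma interiorPaths_le (j m b : ℕ) : interiorPaths j m b ≤ (j - 1) * midBinom (m - j) :=
  calc interiorPaths j m b ≤ ∑ _s ∈ Icc 1 (j - 1), midBinom (m - j) :=
        sum_le_sum fun _ _ => chooseZ_le_midBinom _ _
    _ = (j - 1) * midBinom (m - j) := by simp

/-- The contribution of level `j` to the potential is at most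
`(n + 1) / (n - j + 1) * levelShare j * midBinom n`. -/
def levelShare (j : ℕ) : ℚ := weight j * (j - 1 : ℕ) / 2 ^ j

lemma weight_mul_interiorPaths_le {n j : ℕ} (hj : j ≤ n) (b : ℕ) {ρ : ℚ}
    (hρ : (n + 1 : ℚ) ≤ ρ * ((n - j : ℕ) + 1)) :
    (weight j * interiorPaths j n b : ℚ) ≤ ρ * levelShare j * midBinom n := by
  have hpaths : (interiorPaths j n b : ℚ) ≤ (j - 1 : ℕ) * midBinom (n - j) := by
    exact_mod_cast interiorPaths_le j n b
  have hmid : 2 ^ j * (midBinom (n - j) : ℚ) ≤ ρ * midBinom n := by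
    have h := (midBinom_sub_le hj).trans (mul_le_mul_of_nonneg_right hρ (by positivity))
    refine le_of_mul_le_mul_left (a := ((n - j : ℕ) + 1 : ℚ)) ?_ (by positivity)
    linarith
  calc (weight j * interiorPaths j n b : ℚ) ≤ weight j * ((j - 1 : ℕ) * midBinom (n - j)) := by
        gcongr
    _ = levelShare j * (2 ^ j * midBinom (n - j)) := by unfold levelShare; field_simp
    _ ≤ levelShare j * (ρ * midBinom n) := by unfold levelShare; gcongr
    _ = ρ * levelShare j * midBinom n := by ring

lemma sum_weight_mul_interiorPaths_le {n : ℕ} (b : ℕ) {s : Finset ℕ} {ρ : ℚ}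
    (hs : ∀ j ∈ s, j ≤ n ∧ (n + 1 : ℚ) ≤ ρ * ((n - j : ℕ) + 1)) :
    ∑ j ∈ s, (weight j * interiorPaths j n b : ℚ) ≤ ρ * (∑ j ∈ s, levelShare j) * midBinom n := by
  rw [mul_sum, sum_mul]
  exact sum_le_sum fun j hj => weight_mul_interiorPaths_le (hs j hj).1 b (hs j hj).2

lemma sum_levelShare_Ico_six_thirteen : ∑ j ∈ Ico 6 13, levelShare j = 2191 / 4096 := by
  norm_num [Finset.sum_Ico_succ_top, levelShare, weight]

lemma levelShare_le {j : ℕ} (hj : 6 ≤ j) : levelShare j ≤ j * (j - 1) / 2 ^ j := by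
  unfold levelShare
  rw [Nat.cast_sub (by omega), Nat.cast_one]
  gcongr
  · linarith [show (6 : ℚ) ≤ j by exact_mod_cast hj]
  · exact_mod_cast weight_le_self hj

lemma sum_levelShare_Ico_le {m : ℕ} (hm : 13 ≤ m) (L : ℕ) :
    ∑ j ∈ Ico m L, levelShare j ≤ 12 / 5 * (m * (m - 1) / 2 ^ m) := by
  have hratio : ∀ j ≥ m, ((j + 1 : ℕ) : ℚ) * ((j + 1 : ℕ) - 1) / 2 ^ (j + 1) ≤
      7 / 12 * ((j : ℚ) * (j - 1) / 2 ^ j) := by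
    intro j hj
    have : (13 : ℚ) ≤ j := by exact_mod_cast hm.trans hj
    rw [pow_succ, div_le_iff₀ (by positivity)]
    field_simp
    push_cast
    nlinarith
  calc ∑ j ∈ Ico m L, levelShare j ≤ ∑ j ∈ Ico m L, ((j : ℚ) * (j - 1) / 2 ^ j) :=
        sum_le_sum fun j hj => levelShare_le (by simp at hj; omega)
    _ ≤ (m * (m - 1) / 2 ^ m) / (1 - 7 / 12) :=
        sum_Ico_le_div_of_le_mul (by norm_num)
          (fun j hj => by
            have : (13 : ℚ) ≤ j := by exact_mod_cast hm.trans hj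
            exact div_nonneg (by nlinarith) (by positivity)) hratio L
    _ = 12 / 5 * (m * (m - 1) / 2 ^ m) := by ring

lemma pow_mul_choose_sub_le {n c : ℕ} (hc : 49 * n ≤ 100 * c) {j : ℕ} (hj : j ≤ n) :
    100 ^ j * (n - j).choose c ≤ 51 ^ j * n.choose c := by
  induction j with
  | zero => simp
  | succ j ih =>
    obtain ⟨M, hM⟩ : ∃ M, n - j = M + 1 := ⟨n - j - 1, by omega⟩
    have hstep : 100 * M.choose c ≤ 51 * (M + 1).choose c := by
      have hratio : 100 * (M + 1 - c) ≤ 51 * (M + 1) := by omega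
      refine Nat.le_of_mul_le_mul_left ?_ M.succ_pos
      calc (M + 1) * (100 * M.choose c) = 100 * (M.choose c * (M + 1)) := by ring
        _ = 100 * (M + 1 - c) * (M + 1).choose c := by rw [Nat.choose_mul_succ_eq]; ring
        _ ≤ 51 * (M + 1) * (M + 1).choose c := Nat.mul_le_mul_right _ hratio
        _ = (M + 1) * (51 * (M + 1).choose c) := by ring
    calc 100 ^ (j + 1) * (n - (j + 1)).choose c = 100 ^ j * (100 * M.choose c) := by
          rw [show n - (j + 1) = M by omega]; ring
      _ ≤ 100 ^ j * (51 * (M + 1).choose c) := Nat.mul_le_mul_left _ hstep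
      _ = 51 * (100 ^ j * (n - j).choose c) := by rw [hM]; ring
      _ ≤ 51 * (51 ^ j * n.choose c) := Nat.mul_le_mul_left _ (ih (by omega))
      _ = 51 ^ (j + 1) * n.choose c := by ring

lemma choose_sub_le_midBinom {n c : ℕ} (hc : 49 * n ≤ 100 * c) {j : ℕ} (hj : j ≤ n) :
    ((n - j).choose c : ℚ) ≤ (51 / 100) ^ j * midBinom n := by
  have h : (100 ^ j * (n - j).choose c : ℚ) ≤ 51 ^ j * midBinom n := by
    exact_mod_cast (pow_mul_choose_sub_le hc hj).trans
      (Nat.mul_le_mul_left _ (Nat.choose_le_middle c n))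
  rw [div_pow, div_mul_eq_mul_div, le_div_iff₀ (by positivity)]
  linarith

lemma wallPaths_le {n j : ℕ} (hn : 50 ≤ n) (hj : j ≤ n) :
    (wallPaths j n (n / 2) : ℚ) ≤ 2 * (51 / 100) ^ j * midBinom n := by
  have hfar : (chooseZ (n - j) ((n / 2 : ℕ) - j : ℤ) : ℚ) ≤ (51 / 100) ^ j * midBinom n := by
    rcases le_or_gt j (n / 2) with hjk | hjk
    · rw [show ((n / 2 : ℕ) : ℤ) - j = ((n / 2 - j : ℕ) : ℤ) by omega, chooseZ_natCast,
        ← Nat.choose_symm (by omega), show n - j - (n / 2 - j) = n - n / 2 by omega]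
      exact choose_sub_le_midBinom (by omega) hj
    · rw [chooseZ, if_pos (by omega), Nat.cast_zero]
      positivity
  have hnear := choose_sub_le_midBinom (c := n / 2) (by omega) hj
  rw [wallPaths, chooseZ_natCast, Nat.cast_add]
  linarith

lemma sum_wallPaths_le {n : ℕ} (hn : 50 ≤ n) :
    ∑ j ∈ Icc 6 n, (wallPaths j n (n / 2) : ℚ) ≤ 8 / 100 * midBinom n :=
  calc ∑ j ∈ Icc 6 n, (wallPaths j n (n / 2) : ℚ)
      ≤ ∑ j ∈ Ico 6 (n + 1), 2 * (51 / 100 : ℚ) ^ j * midBinom n := by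
        rw [Ico_add_one_right_eq_Icc]
        exact sum_le_sum fun j hj => wallPaths_le hn (mem_Icc.1 hj).2
    _ = 2 * (∑ j ∈ Ico 6 (n + 1), (51 / 100 : ℚ) ^ j) * midBinom n := by rw [mul_sum, sum_mul]
    _ ≤ 2 * ((51 / 100) ^ 6 / (1 - 51 / 100)) * midBinom n := by
        gcongr
        exact geom_sum_Ico_le_of_lt_one (by norm_num) (by norm_num)
    _ ≤ 8 / 100 * midBinom n := by gcongr; norm_num

lemma sum_low_levels_le {n : ℕ} (hn : 100 ≤ n) (b : ℕ) :
    ∑ j ∈ Ico 6 13, (weight j * interiorPaths j n b : ℚ) ≤ 61 / 100 * midBinom n := by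
  refine (sum_weight_mul_interiorPaths_le b (ρ := 101 / 89) fun j hj => ?_).trans ?_
  · simp only [mem_Ico] at hj
    refine ⟨by omega, ?_⟩
    have : 89 * (n + 1) ≤ 101 * (n - j + 1) := by omega
    have : (89 * (n + 1) : ℚ) ≤ 101 * ((n - j : ℕ) + 1) := by exact_mod_cast this
    linarith
  · rw [sum_levelShare_Ico_six_thirteen]
    gcongr
    norm_num

lemma sum_middle_levels_le {n : ℕ} (b : ℕ) :
    ∑ j ∈ Ico 13 (n / 2 + 1), (weight j * interiorPaths j n b : ℚ) ≤ 1 / 10 * midBinom n := by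
  refine (sum_weight_mul_interiorPaths_le b (ρ := 2) fun j hj => ?_).trans ?_
  · simp only [mem_Ico] at hj
    refine ⟨by omega, ?_⟩
    exact_mod_cast (by omega : n + 1 ≤ 2 * (n - j + 1))
  · have := sum_levelShare_Ico_le le_rfl (n / 2 + 1)
    gcongr
    linarith

lemma mul_sq_mul_le_two_pow {h : ℕ} (hh : 50 ≤ h) : 240 * (h + 1) ^ 2 * h ≤ 2 ^ h := by
  induction h, hh using Nat.le_induction with
  | base => norm_num
  | succ h hh ih =>
    have hpoly : (h + 2) ^ 2 * (h + 1) ≤ 2 * ((h + 1) ^ 2 * h) := by nlinarith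
    rw [pow_succ 2 h]
    nlinarith

lemma sum_high_levels_le {n : ℕ} (hn : 100 ≤ n) (b : ℕ) :
    ∑ j ∈ Ico (n / 2 + 1) (n + 1), (weight j * interiorPaths j n b : ℚ) ≤ 1 / 100 * midBinom n := by
  set h := n / 2
  refine (sum_weight_mul_interiorPaths_le b (ρ := n + 1) fun j hj => ?_).trans ?_
  · simp only [mem_Ico] at hj
    exact ⟨by omega, le_mul_of_one_le_right (by positivity) (by simp)⟩
  · gcongr
    refine (mul_le_mul_of_nonneg_left (sum_levelShare_Ico_le (by omega) (n + 1))
      (by positivity)).trans ?_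
    have hpow : (240 * (h + 1) ^ 2 * h : ℚ) ≤ 2 ^ h := by
      exact_mod_cast mul_sq_mul_le_two_pow (by omega)
    have hn' : (n + 1 : ℚ) ≤ 2 * (h + 1) := by exact_mod_cast (by omega : n + 1 ≤ 2 * (h + 1))
    rw [pow_succ]
    push_cast
    rw [add_sub_cancel_right, ← mul_assoc, mul_div_assoc', div_le_iff₀ (by positivity)]
    nlinarith [pow_pos (two_pos : (0 : ℚ) < 2) h]

lemma potential_lt_choose {n : ℕ} (hn : 100 ≤ n) : potential n (n / 2) < n.choose (n / 2) := by
  have hsplit : (potential n (n / 2) : ℚ) =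
      ∑ j ∈ Ico 6 13, (weight j * interiorPaths j n (n / 2) : ℚ) +
      ∑ j ∈ Ico 13 (n / 2 + 1), (weight j * interiorPaths j n (n / 2) : ℚ) +
      ∑ j ∈ Ico (n / 2 + 1) (n + 1), (weight j * interiorPaths j n (n / 2) : ℚ) +
      ∑ j ∈ Icc 6 n, (wallPaths j n (n / 2) : ℚ) := by
    rw [sum_Ico_consecutive _ (by omega) (by omega), sum_Ico_consecutive _ (by omega) (by omega),
      Ico_add_one_right_eq_Icc, potential]
    push_cast
    rw [sum_add_distrib]
  have hpos : (0 : ℚ) < midBinom n := by exact_mod_cast Nat.choose_pos (Nat.div_le_self n 2)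
  have : (potential n (n / 2) : ℚ) < midBinom n := by
    linarith [sum_low_levels_le hn (n / 2), sum_middle_levels_le (n := n) (n / 2),
      sum_high_levels_le hn (n / 2), sum_wallPaths_le (n := n) (by omega)]
  exact_mod_cast this

instance (n k : ℕ) : Fintype (Slice n k) :=
  inferInstanceAs (Fintype {A : Finset (Fin n) // A.card = k})

instance (n k : ℕ) : DecidableEq (Slice n k) :=
  inferInstanceAs (DecidableEq {A : Finset (Fin n) // A.card = k})

lemma card_slice (n k : ℕ) : Fintype.card (Slice n k) = n.choose k := by
  change Fintype.card {A : Finset (Fin n) // A.card = k} = _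
  rw [Fintype.card_finset_len, Fintype.card_fin]

lemma exists_not_computes_of_depth_le {n : ℕ} (hn : 100 ≤ n) :
    ∃ f : Slice n (n / 2) → Bool, ∀ T : DecTree n, T.depth ≤ n - 6 → ¬Computes T f := by
  by_contra! h
  let S := DecTree.canonical (n := n) univ (n / 2) (n - n / 2) (n - 6)
  have hsurj : Function.Surjective fun (T : S) (A : Slice n (n / 2)) => T.1.eval A.1 := by
    intro f
    obtain ⟨T, hT, hf⟩ := h f
    obtain ⟨T', hT', heq⟩ := DecTree.exists_canonical_eval_eq (n / 2) T hT ∅ ∅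
    refine ⟨⟨T', by simpa using hT'⟩, funext fun A => ?_⟩
    exact (heq A.1 ⟨A.2, empty_subset _, disjoint_empty_right _⟩).trans (hf A)
  have hfunctions := Fintype.card_le_of_surjective _ hsurj
  rw [Fintype.card_fun, card_slice, Fintype.card_bool, Fintype.card_coe] at hfunctions
  have htrees :=
    DecTree.card_canonical_le (n - 6) (univ : Finset (Fin n)) (n / 2) (by simp; omega) (by omega)
  rw [show n - 6 + 6 = n by omega] at htrees
  exact (Nat.pow_lt_pow_right one_lt_two (potential_lt_choose hn)).not_ge (hfunctions.trans htrees)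

theorem stmt_1 (n : ℕ) (hn : 100 ≤ n) :
    Equery n (n / 2) ≤ 5 ∧
    ∃ f : Slice n (n / 2) → Bool, n - 5 ≤ Dquery n (n / 2) f := by
  obtain ⟨f, hf⟩ := exists_not_computes_of_depth_le hn
  have hDf : n - 5 ≤ Dquery n (n / 2) f :=
    le_Dquery_of_forall_computes fun T hT => hf T (by omega)
  have hDmax := Dquery_le_Dmax f
  exact ⟨by unfold Equery; omega, f, hDf⟩
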